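/- For any 2ⁿ×2ⁿ complex matrix ρ, the distance to its diagonal part is controlled by the per-qubit dephasing disturbances: ‖diag(ρ) − ρ‖₂ ≤ (1/2)·∑_{i=1}^{n} ‖Z_i ρ Z_i − ρ‖₂. -/

import Mathlib

/-!
Conjugation by `Z_i` flips the sign of exactly those entries `ρ s t` with `s i ≠ t i`, so
`Z_i ρ Z_i - ρ` is `-2` times the part of `ρ` that is off-diagonal in qubit `i`. Every
off-diagonal entry (`s ≠ t`) is off-diagonal in some qubit, so the squared Frobenius norm of
`diag ρ - ρ` is at most `∑ᵢ ‖(Z_i ρ Z_i - ρ) / 2‖₂²`, and `√(∑ xᵢ²) ≤ ∑ xᵢ` for `xᵢ ≥ 0`.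
-/

noncomputable section

/-- The single-qubit Pauli Z acting on qubit `i` of an `n`-qubit system:
the diagonal unitary with entries (Z_i)_{s,s} = (−1)^{s_i}. -/
def Zat (n : ℕ) (i : Fin n) : Matrix (Fin n → Fin 2) (Fin n → Fin 2) ℂ :=
  Matrix.diagonal fun s => (-1 : ℂ) ^ (s i : ℕ)

/-- The Frobenius (Hilbert–Schmidt) norm of a complex matrix. -/
def frob {m n : Type*} [Fintype m] [Fintype n] (A : Matrix m n ℂ) : ℝ :=
  Real.sqrt (∑ i, ∑ j, ‖A i j‖ ^ 2)

open Matrix Finset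

section Frobenius

variable {m n : Type*} [Fintype m] [Fintype n]

lemma frob_nonneg (A : Matrix m n ℂ) : 0 ≤ frob A :=
  Real.sqrt_nonneg _

lemma frob_sq (A : Matrix m n ℂ) : frob A ^ 2 = ∑ i, ∑ j, ‖A i j‖ ^ 2 :=
  Real.sq_sqrt (by positivity)

lemma frob_smul (c : ℂ) (A : Matrix m n ℂ) : frob (c • A) = ‖c‖ * frob A := by
  simp only [frob, Matrix.smul_apply, smul_eq_mul, norm_mul, mul_pow, ← mul_sum]
  rw [Real.sqrt_mul (by positivity), Real.sqrt_sq (norm_nonneg c)]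

lemma frob_le_sum_frob_of_norm_sq_le {ι : Type*} (S : Finset ι) (A : Matrix m n ℂ)
    (B : ι → Matrix m n ℂ) (h : ∀ i j, ‖A i j‖ ^ 2 ≤ ∑ k ∈ S, ‖B k i j‖ ^ 2) :
    frob A ≤ ∑ k ∈ S, frob (B k) := by
  rw [frob, Real.sqrt_le_left (sum_nonneg fun k _ => frob_nonneg (B k))]
  calc ∑ i, ∑ j, ‖A i j‖ ^ 2
      ≤ ∑ i, ∑ j, ∑ k ∈ S, ‖B k i j‖ ^ 2 := by gcongr with i _ j _; exact h i j
    _ = ∑ k ∈ S, frob (B k) ^ 2 := by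
      simp only [frob_sq]
      exact (sum_congr rfl fun _ _ => sum_comm).trans sum_comm
    _ ≤ (∑ k ∈ S, frob (B k)) ^ 2 :=
      sum_sq_le_sq_sum_of_nonneg fun k _ => frob_nonneg (B k)

end Frobenius

lemma le_sum_ite_eq_zero_of_ne {ι α : Type*} [Fintype ι] [DecidableEq α] {s t : ι → α}
    (hst : s ≠ t) {c : ℝ} (hc : 0 ≤ c) : c ≤ ∑ i, if s i = t i then 0 else c := by
  obtain ⟨i, hi⟩ := Function.ne_iff.mp hst
  calc c = if s i = t i then 0 else c := (if_neg hi).symm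
    _ ≤ _ := single_le_sum (f := fun j => if s j = t j then 0 else c)
        (fun j _ => by split <;> [rfl; exact hc]) (mem_univ i)

lemma neg_one_pow_mul_neg_one_pow_fin_two (u v : Fin 2) :
    (-1 : ℂ) ^ (u : ℕ) * (-1 : ℂ) ^ (v : ℕ) = if u = v then 1 else -1 := by
  fin_cases u <;> fin_cases v <;> norm_num

lemma Zat_mul_mul_Zat_sub_apply {n : ℕ} (i : Fin n)
    (ρ : Matrix (Fin n → Fin 2) (Fin n → Fin 2) ℂ) (s t : Fin n → Fin 2) :
    (Zat n i * ρ * Zat n i - ρ) s t = if s i = t i then 0 else -2 * ρ s t := by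
  have hconj : (Zat n i * ρ * Zat n i) s t
      = (-1 : ℂ) ^ (s i : ℕ) * (-1 : ℂ) ^ (t i : ℕ) * ρ s t := by
    simp only [Zat, diagonal_mul, mul_diagonal]
    ring
  rw [Matrix.sub_apply, hconj, neg_one_pow_mul_neg_one_pow_fin_two]
  split <;> ring

lemma norm_diagonal_sub_apply_sq_le {n : ℕ} (ρ : Matrix (Fin n → Fin 2) (Fin n → Fin 2) ℂ)
    (s t : Fin n → Fin 2) :
    ‖(diagonal (fun s => ρ s s) - ρ) s t‖ ^ 2
      ≤ ∑ i, ‖((1 / 2 : ℂ) • (Zat n i * ρ * Zat n i - ρ)) s t‖ ^ 2 := by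
  have hhalf (i : Fin n) : ‖((1 / 2 : ℂ) • (Zat n i * ρ * Zat n i - ρ)) s t‖ ^ 2
      = if s i = t i then 0 else ‖ρ s t‖ ^ 2 := by
    rw [Matrix.smul_apply, Zat_mul_mul_Zat_sub_apply]
    split <;> norm_num [← mul_assoc]
  simp only [hhalf]
  rcases eq_or_ne s t with rfl | hst
  · simp
  · rw [Matrix.sub_apply, diagonal_apply_ne _ hst, zero_sub, norm_neg]
    exact le_sum_ite_eq_zero_of_ne hst (by positivity)

theorem distance_to_diagonal_le_sum_dephasing_disturbances (n : ℕ)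
    (ρ : Matrix (Fin n → Fin 2) (Fin n → Fin 2) ℂ) :
    frob (Matrix.diagonal (fun s => ρ s s) - ρ)
      ≤ (1 / 2) * ∑ i : Fin n, frob (Zat n i * ρ * Zat n i - ρ) := by
  have h := frob_le_sum_frob_of_norm_sq_le univ _
    (fun i => (1 / 2 : ℂ) • (Zat n i * ρ * Zat n i - ρ)) (norm_diagonal_sub_apply_sq_le ρ)
  simpa only [frob_smul, mul_sum, norm_div, norm_one, Complex.norm_ofNat] using h
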